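/- arXiv:2110.02486 — 2 statements merged into one kernel-verified Lean document; each statement's English description precedes it below -/
import Mathlib

section
/- Let f ∈ C(R,K) have the wavelet expansion f = ∑_{r∈ℛ} b_r(f) χ_r. Then f ∈ N^1(R,K) (i.e. f is a C^1-function with f' = 0) if and only if lim_{r∈ℛ_+} b_r(f)γ_r^{-1} = 0, meaning: for every ε > 0 there is a finite subset S_ε ⊂ ℛ_+ such that |b_r(f)γ_r^{-1}| < ε for all r ∈ ℛ_+ \ S_ε. -/
open scoped ENNReal NNReal
open Filter Topology

noncomputable section

namespace DSW

variable {K : Type*} [NontriviallyNormedField K] [CompleteSpace K] [IsUltrametricDist K]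

/-- The ring of integers `R = {x : K | ‖x‖ ≤ 1}`, as a subset of `K`. -/
def Rint (K : Type*) [NontriviallyNormedField K] : Set K := {x : K | ‖x‖ ≤ 1}

/-- `∇ⁿR`: the set of tuples of pairwise distinct elements of `R`. -/
def nabla (K : Type*) [NontriviallyNormedField K] (n : ℕ) : Set (Fin n → K) :=
  {x | (∀ i, ‖x i‖ ≤ 1) ∧ Function.Injective x}

/-- The `n`-th difference quotient `Φₙ f`. -/
def Phi (f : K → K) : ∀ n : ℕ, (Fin (n + 1) → K) → K
  | 0, x => f (x 0)
  | n + 1, x =>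
      (Phi f n (Fin.cons (x 0) fun i => x i.succ.succ) -
        Phi f n (Fin.cons (x 1) fun i => x i.succ.succ)) / (x 0 - x 1)

/-- `f` is a `Cⁿ`-function: `Φₙ f` extends to a continuous function on `R^(n+1)`. -/
def IsCn (f : K → K) (n : ℕ) : Prop :=
  ∃ g : (Fin (n + 1) → K) → K,
    ContinuousOn g {x | ∀ i, ‖x i‖ ≤ 1} ∧
      ∀ x : Fin (n + 1) → K, (∀ i, ‖x i‖ ≤ 1) → Function.Injective x → g x = Phi f n x

/-- `Dₙ f a = Φₙ f (a, …, a)`, defined (for `n ≥ 1`) as the limit of `Φₙ f` at the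
diagonal point `(a, …, a)`, and `D₀ f = f`. -/
def Dq (f : K → K) : ℕ → K → K
  | 0 => f
  | n + 1 => fun a =>
      limUnder (𝓝[{x : Fin (n + 2) → K | Function.Injective x}] fun _ => a) (Phi f (n + 1))

/-- `ψⱼ f (x, y) = (f x − f y − ∑_{l=1}^{j} (x−y)^l Dₗf y) / (x−y)^(j+1)`. -/
def psi (f : K → K) (j : ℕ) (x y : K) : K :=
  (f x - f y - ∑ l ∈ Finset.Icc 1 j, (x - y) ^ l * Dq f l y) / (x - y) ^ (j + 1)

variable (π : K) (𝒯 : Set K)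

/-- `ℛₘ`: the set of sums `∑_{i<m} aᵢ πⁱ` with digits in `𝒯`. -/
def Rm (m : ℕ) : Set K :=
  {x | ∃ a : Fin m → K, (∀ i, a i ∈ 𝒯) ∧ x = ∑ i, a i * π ^ (i : ℕ)}

/-- `ℛ = ⋃ₘ ℛₘ`. -/
def RR : Set K := ⋃ m, Rm π 𝒯 m

/-- `ℛ₊ = ℛ \ {0}`. -/
def RPlus : Set K := RR π 𝒯 \ {0}

/-- The length `l(r)`: the least `m` with `r ∈ ℛₘ`. -/
def len (r : K) : ℕ := sInf {m | r ∈ Rm π 𝒯 m}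

/-- `χ_r`: characteristic function of the disk `{x : ‖x − r‖ ≤ ‖π‖^(l r)}`. -/
def chi (r x : K) : K := if ‖x - r‖ ≤ ‖π‖ ^ len π 𝒯 r then 1 else 0

/-- The truncation `x_m`: the unique element of `ℛₘ` with `‖x − x_m‖ ≤ ‖π‖^m`. -/
def trunc (x : K) (m : ℕ) : K :=
  Classical.epsilon fun s => s ∈ Rm π 𝒯 m ∧ ‖x - s‖ ≤ ‖π‖ ^ m

/-- `r₋`: the truncation of `r` dropping the top digit. -/
def rminus (r : K) : K := trunc π 𝒯 r (len π 𝒯 r - 1)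

open Classical in
/-- `γ_r = 1` if `r = 0`, `γ_r = r − r₋` otherwise. -/
def gamma (r : K) : K := if r = 0 then 1 else r - rminus π 𝒯 r

open Classical in
/-- The wavelet coefficients `b_r(f)` of a continuous function. -/
def b0 (f : K → K) (r : K) : K := if r = 0 then f 0 else f r - f (rminus π 𝒯 r)

/-- `c` is the coefficient family of the expansion of `f` with respect to the wavelet
basis `{γ_r^(n−j) (x − r)^j χ_r(x) : r ∈ ℛ, 0 ≤ j ≤ n}` of `Cⁿ(R, K)`. -/
def IsExpansion (n : ℕ) (f : K → K) (c : K → ℕ → K) : Prop :=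
  ∀ x ∈ Rint K, HasSum
    (fun p : RR π 𝒯 × Fin (n + 1) =>
      c ↑p.1 ↑p.2 * gamma π 𝒯 ↑p.1 ^ (n - (p.2 : ℕ)) * (x - ↑p.1) ^ (p.2 : ℕ) *
        chi π 𝒯 ↑p.1 x)
    (f x)

/-- The coefficients `b_r^{n,j}(f)` of the expansion of `f ∈ Cⁿ(R,K)`. -/
def bcoef (n : ℕ) (f : K → K) : K → ℕ → K := Classical.epsilon (IsExpansion π 𝒯 n f)

/-- The norm `|f|_n` on `Cⁿ(R, K)`, with values in `ℝ≥0∞`; `|f|_0` is the sup norm and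
`|f|_(n+1) = sup_{r ∈ ℛ} max_{0 ≤ j ≤ n} |b_r^{n,j}(f) γ_r⁻¹|`. -/
def CnNorm : ℕ → (K → K) → ℝ≥0∞
  | 0, f => ⨆ x : Rint K, (‖f ↑x‖₊ : ℝ≥0∞)
  | n + 1, f =>
      ⨆ r : RR π 𝒯, ⨆ j : Fin (n + 1),
        (‖bcoef π 𝒯 n f ↑r ↑j * (gamma π 𝒯 ↑r)⁻¹‖₊ : ℝ≥0∞)

/-- `K` is a local field with uniformizer `π`, residue field of cardinality `q`, and
set of residue representatives `𝒯` (containing `0`). -/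
structure LocalFieldData (π : K) (𝒯 : Set K) (q : ℕ) : Prop where
  one_lt_q : 1 < q
  norm_pi : ‖π‖ = (q : ℝ)⁻¹
  norm_discrete : ∀ x : K, x ≠ 0 → ∃ n : ℤ, ‖x‖ = ‖π‖ ^ n
  rep_subset : 𝒯 ⊆ Rint K
  zero_mem : (0 : K) ∈ 𝒯
  finite_rep : 𝒯.Finite
  card_rep : Nat.card 𝒯 = q
  rep_unique : ∀ x : K, ‖x‖ ≤ 1 → ∃! t, t ∈ 𝒯 ∧ ‖x - t‖ < 1


/-- The norm `|f|₁ = sup_{r ∈ ℛ} |b_r(f) γ_r⁻¹|` on `C¹(R, K)`. -/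
def wnorm1 (f : K → K) : ℝ≥0∞ :=
  ⨆ r : RR π 𝒯, (‖b0 π 𝒯 f ↑r * (gamma π 𝒯 ↑r)⁻¹‖₊ : ℝ≥0∞)

/-- The `Cⁿ`-antiderivation `Pₙ f (x) = ∑_{j<n} ∑_m f⁽ʲ⁾(x_m)/(j+1)! (x_{m+1} − x_m)^(j+1)`. -/
def Pn (n : ℕ) (f : K → K) (x : K) : K :=
  ∑ j ∈ Finset.range n, ∑' m : ℕ,
    iteratedDeriv j f (trunc π 𝒯 x m) / (((j + 1).factorial : ℕ) : K) *
      (trunc π 𝒯 x (m + 1) - trunc π 𝒯 x m) ^ (j + 1)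

/-- `Pₙ ∘ Pₙ₋₁ ∘ ⋯ ∘ P₁`. -/
def Tnaux : ℕ → (K → K) → K → K
  | 0, f => f
  | n + 1, f => Pn π 𝒯 (n + 1) (Tnaux n f)

/-! Both sides are equivalent to the uniform flatness of `f` on `R`: for every `ε > 0` there is
`δ > 0` with `|f x − f y| ≤ ε |x − y|` whenever `|x − y| < δ`.

If `f` is `C¹` with `f' = 0`, the extension of `Φ₁ f` vanishes on the diagonal and is uniformly
continuous on the compact `R²`, which is flatness. Conversely, flatness makes `Φ₁ f` continuous
(on the diagonal it is `0 / 0 = 0` in Lean, the right value).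

Since `b_r(f) γ_r⁻¹ = Φ₁ f (r, r₋)` with `|r − r₋| ≤ |π|^(l(r)−1)`, flatness makes the coefficients
tend to `0`. Conversely, if `|x − y| = |π|^n` then `x_n = y_n`, and in the telescoping sum
`f x − f x_n = ∑_{m ≥ n} (f x_{m+1} − f x_m)` each term is `0` or `b_r(f)` for `r = x_{m+1}`, with
`|γ_r| ≤ |π|^m`; so `|f x − f y| ≤ ε |π|^n = ε |x − y|` once `n` is large. -/

section UniformlyFlat

variable {𝕜 : Type*} [NontriviallyNormedField 𝕜]

def UniformlyFlatOn (f : 𝕜 → 𝕜) (s : Set 𝕜) : Prop :=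
  ∀ ε > 0, ∃ δ > 0, ∀ x ∈ s, ∀ y ∈ s, ‖x - y‖ < δ → ‖slope f x y‖ ≤ ε

theorem UniformlyFlatOn.hasDerivWithinAt {f : 𝕜 → 𝕜} {s : Set 𝕜} (h : UniformlyFlatOn f s)
    {a : 𝕜} (ha : a ∈ s) : HasDerivWithinAt f 0 s a := by
  rw [hasDerivWithinAt_iff_tendsto_slope, Metric.tendsto_nhdsWithin_nhds]
  intro ε hε
  obtain ⟨δ, hδ, hflat⟩ := h (ε / 2) (half_pos hε)
  refine ⟨δ, hδ, fun x hx hxa => ?_⟩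
  rw [dist_eq_norm, norm_sub_rev] at hxa
  rw [dist_zero_right]
  exact (hflat a ha x hx.1 hxa).trans_lt (half_lt_self hε)

theorem UniformlyFlatOn.continuousOn_slope {f : 𝕜 → 𝕜} {s : Set 𝕜} (h : UniformlyFlatOn f s)
    (hf : ContinuousOn f s) :
    ContinuousOn (fun v : Fin 2 → 𝕜 => slope f (v 1) (v 0)) {v | ∀ i, v i ∈ s} := by
  intro v hv
  by_cases hdiag : v 0 = v 1
  · rw [Metric.continuousWithinAt_iff]
    intro ε hε
    obtain ⟨δ, hδ, hflat⟩ := h (ε / 2) (half_pos hε)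
    refine ⟨δ / 2, half_pos hδ, fun w hw hwv => ?_⟩
    have hcoord : ∀ i, ‖w i - v i‖ < δ / 2 := fun i => by
      rw [← dist_eq_norm]; exact (dist_le_pi_dist w v i).trans_lt hwv
    have hw01 : ‖w 1 - w 0‖ < δ := calc
      ‖w 1 - w 0‖ = ‖(w 1 - v 1) - (w 0 - v 0)‖ := by rw [hdiag]; congr 1; ring
      _ ≤ ‖w 1 - v 1‖ + ‖w 0 - v 0‖ := norm_sub_le _ _
      _ < δ / 2 + δ / 2 := add_lt_add (hcoord 1) (hcoord 0)
      _ = δ := add_halves δ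
    simp only [hdiag, slope_same, dist_zero_right]
    exact (hflat _ (hw 1) _ (hw 0) hw01).trans_lt (half_lt_self hε)
  · have hfv : ∀ i, ContinuousOn (fun w : Fin 2 → 𝕜 => f (w i)) {v | ∀ i, v i ∈ s} :=
      fun i => hf.comp (continuous_apply i).continuousOn fun w hw => hw i
    simp only [slope_def_field]
    exact ((hfv 0 v hv).sub (hfv 1 v hv)).div
      ((continuous_apply 0).sub (continuous_apply 1)).continuousWithinAt (sub_ne_zero.2 hdiag)

theorem uniformlyFlatOn_of_continuousOn_slope {f : 𝕜 → 𝕜} {s : Set 𝕜} (hs : IsCompact s)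
    (h : ContinuousOn (fun v : Fin 2 → 𝕜 => slope f (v 1) (v 0)) {v | ∀ i, v i ∈ s}) :
    UniformlyFlatOn f s := by
  have hcpt : IsCompact {v : Fin 2 → 𝕜 | ∀ i, v i ∈ s} := by
    simpa [Set.pi] using isCompact_univ_pi fun _ : Fin 2 => hs
  intro ε hε
  obtain ⟨δ, hδ, hUC⟩ :=
    Metric.uniformContinuousOn_iff.1 (hcpt.uniformContinuousOn_of_continuous h) ε hε
  refine ⟨δ, hδ, fun x hx y hy hxy => ?_⟩
  have hdist : dist ![y, x] ![x, x] < δ := by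
    rw [dist_pi_lt_iff hδ, Fin.forall_fin_two]
    simpa [dist_eq_norm, norm_sub_rev, hδ] using hxy
  have := hUC ![y, x] (Fin.forall_fin_two.2 ⟨hy, hx⟩) ![x, x] (Fin.forall_fin_two.2 ⟨hx, hx⟩) hdist
  simpa [slope_same, dist_zero_right] using this.le

theorem extension_slope_diag_eq_zero {f : 𝕜 → 𝕜} {s : Set 𝕜} {g : (Fin 2 → 𝕜) → 𝕜}
    (hg : ContinuousOn g {v | ∀ i, v i ∈ s})
    (hgf : ∀ v, (∀ i, v i ∈ s) → Function.Injective v → g v = slope f (v 1) (v 0))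
    {a : 𝕜} (ha : a ∈ s) (hacc : (𝓝[s \ {a}] a).NeBot) (hD : HasDerivWithinAt f 0 s a) :
    g ![a, a] = 0 := by
  have hpath : Tendsto (fun x => ![x, a]) (𝓝[s \ {a}] a) (𝓝[{v | ∀ i, v i ∈ s}] ![a, a]) :=
    tendsto_nhdsWithin_iff.2
      ⟨((by fun_prop : Continuous fun x : 𝕜 => ![x, a]).tendsto a).mono_left nhdsWithin_le_nhds,
        eventually_nhdsWithin_of_forall fun x hx => Fin.forall_fin_two.2 ⟨hx.1, ha⟩⟩
  have hlim : Tendsto (fun x => g ![x, a]) (𝓝[s \ {a}] a) (𝓝 (g ![a, a])) :=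
    (hg _ (Fin.forall_fin_two.2 ⟨ha, ha⟩)).tendsto.comp hpath
  refine tendsto_nhds_unique hlim ((hasDerivWithinAt_iff_tendsto_slope.1 hD).congr' ?_)
  filter_upwards [self_mem_nhdsWithin] with x hx
  exact (hgf ![x, a] (Fin.forall_fin_two.2 ⟨hx.1, ha⟩) (injective_pair_iff_ne.2 hx.2)).symm

theorem continuousOn_slope_of_extension {f : 𝕜 → 𝕜} {s : Set 𝕜} {g : (Fin 2 → 𝕜) → 𝕜}
    (hacc : ∀ a ∈ s, (𝓝[s \ {a}] a).NeBot) (hg : ContinuousOn g {v | ∀ i, v i ∈ s})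
    (hgf : ∀ v, (∀ i, v i ∈ s) → Function.Injective v → g v = slope f (v 1) (v 0))
    (hD : ∀ a ∈ s, HasDerivWithinAt f 0 s a) :
    ContinuousOn (fun v : Fin 2 → 𝕜 => slope f (v 1) (v 0)) {v | ∀ i, v i ∈ s} := by
  refine hg.congr fun v hv => ?_
  by_cases hv01 : v 0 = v 1
  · have hvdiag : v = ![v 1, v 1] := by ext i; fin_cases i <;> simp [hv01]
    rw [hv01, slope_same, hvdiag,
      extension_slope_diag_eq_zero hg hgf (hv 1) (hacc _ (hv 1)) (hD _ (hv 1))]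
  · have hinj : Function.Injective v := by
      intro i j; fin_cases i <;> fin_cases j <;> simp_all [eq_comm]
    exact (hgf v hv hinj).symm

theorem Phi_one_eq_slope (f : 𝕜 → 𝕜) (v : Fin 2 → 𝕜) : Phi f 1 v = slope f (v 1) (v 0) := by
  simp [Phi, slope_def_field]

end UniformlyFlat

section LocalField

variable {K : Type*} [NontriviallyNormedField K] {π : K} {𝒯 : Set K} {q : ℕ}

theorem LocalFieldData.norm_pi_pos (hK : LocalFieldData π 𝒯 q) : 0 < ‖π‖ := by
  rw [hK.norm_pi]
  have : (1 : ℝ) < q := by exact_mod_cast hK.one_lt_q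
  positivity

theorem LocalFieldData.norm_pi_lt_one (hK : LocalFieldData π 𝒯 q) : ‖π‖ < 1 := by
  rw [hK.norm_pi, inv_lt_one_iff₀]
  exact Or.inr (by exact_mod_cast hK.one_lt_q)

theorem LocalFieldData.pi_ne_zero (hK : LocalFieldData π 𝒯 q) : π ≠ 0 :=
  norm_pos_iff.1 hK.norm_pi_pos

theorem LocalFieldData.exists_norm_eq_pow (hK : LocalFieldData π 𝒯 q) {x : K} (hx0 : x ≠ 0)
    (hx1 : ‖x‖ ≤ 1) : ∃ n : ℕ, ‖x‖ = ‖π‖ ^ n := by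
  obtain ⟨n, hn⟩ := hK.norm_discrete x hx0
  have hn0 : 0 ≤ n := by
    by_contra hneg
    have : 1 < ‖π‖ ^ n := one_lt_zpow_of_neg₀ hK.norm_pi_pos hK.norm_pi_lt_one (not_le.1 hneg)
    linarith
  lift n to ℕ using hn0
  exact ⟨n, by simpa using hn⟩

theorem LocalFieldData.norm_le_norm_pi (hK : LocalFieldData π 𝒯 q) {x : K} (hx : ‖x‖ < 1) :
    ‖x‖ ≤ ‖π‖ := by
  rcases eq_or_ne x 0 with rfl | hx0
  · simp
  obtain ⟨n, hn⟩ := hK.exists_norm_eq_pow hx0 hx.le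
  have hn0 : n ≠ 0 := by rintro rfl; simp [hn] at hx
  rw [hn]
  exact pow_le_of_le_one hK.norm_pi_pos.le hK.norm_pi_lt_one.le hn0

theorem LocalFieldData.eq_of_norm_sub_lt_one (hK : LocalFieldData π 𝒯 q) {t t' : K} (ht : t ∈ 𝒯)
    (ht' : t' ∈ 𝒯) (h : ‖t - t'‖ < 1) : t = t' := by
  obtain ⟨u, -, hu⟩ := hK.rep_unique t (hK.rep_subset ht)
  rw [hu t ⟨ht, by simp⟩, hu t' ⟨ht', h⟩]

theorem Rm_zero : Rm π 𝒯 0 = {0} := by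
  ext x
  constructor
  · rintro ⟨a, -, rfl⟩; simp
  · rintro rfl; exact ⟨Fin.elim0, fun i => i.elim0, by simp⟩

theorem sum_digits_succ {m : ℕ} (a : Fin (m + 1) → K) :
    ∑ i, a i * π ^ (i : ℕ) = a 0 + π * ∑ i : Fin m, a i.succ * π ^ (i : ℕ) := by
  simp only [Fin.sum_univ_succ, Fin.val_zero, pow_zero, mul_one, Fin.val_succ, pow_succ,
    Finset.mul_sum]
  congr 1
  exact Finset.sum_congr rfl fun i _ => by ring

theorem mem_Rm_succ_iff {m : ℕ} {x : K} :
    x ∈ Rm π 𝒯 (m + 1) ↔ ∃ t ∈ 𝒯, ∃ s ∈ Rm π 𝒯 m, x = t + π * s := by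
  constructor
  · rintro ⟨a, ha, rfl⟩
    exact ⟨a 0, ha 0, _, ⟨fun i => a i.succ, fun i => ha _, rfl⟩, sum_digits_succ a⟩
  · rintro ⟨t, ht, s, ⟨a, ha, rfl⟩, rfl⟩
    refine ⟨Fin.cons t a, Fin.cases ht ha, ?_⟩
    simp [sum_digits_succ]

theorem zero_mem_Rm (hK : LocalFieldData π 𝒯 q) (m : ℕ) : (0 : K) ∈ Rm π 𝒯 m :=
  ⟨fun _ => 0, fun _ => hK.zero_mem, by simp⟩

theorem Rm_mono (hK : LocalFieldData π 𝒯 q) : Monotone (Rm π 𝒯) := by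
  refine monotone_nat_of_le_succ fun m => ?_
  induction m with
  | zero => simpa [Rm_zero] using zero_mem_Rm hK 1
  | succ m ih =>
    intro x hx
    obtain ⟨t, ht, s, hs, rfl⟩ := mem_Rm_succ_iff.1 hx
    exact mem_Rm_succ_iff.2 ⟨t, ht, s, ih hs, rfl⟩

theorem Rm_finite (hK : LocalFieldData π 𝒯 q) (m : ℕ) : (Rm π 𝒯 m).Finite := by
  refine ((Set.Finite.pi fun _ : Fin m => hK.finite_rep).image
    fun a : Fin m → K => ∑ i, a i * π ^ (i : ℕ)).subset ?_
  rintro x ⟨a, ha, rfl⟩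
  exact ⟨a, fun i _ => ha i, rfl⟩

theorem len_le {r : K} {m : ℕ} (h : r ∈ Rm π 𝒯 m) : len π 𝒯 r ≤ m :=
  Nat.sInf_le h

theorem mem_Rm_len {r : K} (h : r ∈ RR π 𝒯) : r ∈ Rm π 𝒯 (len π 𝒯 r) :=
  Nat.sInf_mem (Set.mem_iUnion.1 h)

theorem lt_len_of_notMem_Rm (hK : LocalFieldData π 𝒯 q) {r : K} (hr : r ∈ RR π 𝒯) {m : ℕ}
    (h : r ∉ Rm π 𝒯 m) : m < len π 𝒯 r :=
  not_le.1 fun hle => h (Rm_mono hK hle (mem_Rm_len hr))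

theorem b0_mul_gamma_inv (f : K → K) {r : K} (hr : r ≠ 0) :
    b0 π 𝒯 f r * (gamma π 𝒯 r)⁻¹ = slope f (rminus π 𝒯 r) r := by
  rw [b0, gamma, if_neg hr, if_neg hr, slope_def_field, div_eq_mul_inv]

theorem exists_mem_Rm_norm_sub_le (hK : LocalFieldData π 𝒯 q) {x : K} (hx : x ∈ Rint K) (m : ℕ) :
    ∃ s ∈ Rm π 𝒯 m, ‖x - s‖ ≤ ‖π‖ ^ m := by
  induction m generalizing x with
  | zero => exact ⟨0, zero_mem_Rm hK 0, by rw [sub_zero, pow_zero]; exact hx⟩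
  | succ m ih =>
    obtain ⟨t, ⟨ht, hxt⟩, -⟩ := hK.rep_unique x hx
    have hy : (x - t) / π ∈ Rint K := by
      show ‖(x - t) / π‖ ≤ 1
      rw [norm_div, div_le_one hK.norm_pi_pos]
      exact hK.norm_le_norm_pi hxt
    obtain ⟨s, hs, hys⟩ := ih hy
    refine ⟨t + π * s, mem_Rm_succ_iff.2 ⟨t, ht, s, hs, rfl⟩, ?_⟩
    have hxs : x - (t + π * s) = π * ((x - t) / π - s) := by
      field_simp [hK.pi_ne_zero]
      ring
    rw [hxs, norm_mul, pow_succ']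
    exact mul_le_mul_of_nonneg_left hys hK.norm_pi_pos.le

theorem trunc_spec (hK : LocalFieldData π 𝒯 q) {x : K} (hx : x ∈ Rint K) (m : ℕ) :
    trunc π 𝒯 x m ∈ Rm π 𝒯 m ∧ ‖x - trunc π 𝒯 x m‖ ≤ ‖π‖ ^ m :=
  Classical.epsilon_spec (exists_mem_Rm_norm_sub_le hK hx m)

theorem tendsto_trunc (hK : LocalFieldData π 𝒯 q) {x : K} (hx : x ∈ Rint K) :
    Tendsto (trunc π 𝒯 x) atTop (𝓝 x) := by
  rw [tendsto_iff_norm_sub_tendsto_zero]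
  refine squeeze_zero (fun _ => norm_nonneg _) (fun m => ?_)
    (tendsto_pow_atTop_nhds_zero_of_lt_one hK.norm_pi_pos.le hK.norm_pi_lt_one)
  rw [norm_sub_rev]
  exact (trunc_spec hK hx m).2

theorem isCompact_Rint [CompleteSpace K] (hK : LocalFieldData π 𝒯 q) : IsCompact (Rint K) := by
  rw [isCompact_iff_totallyBounded_isComplete]
  refine ⟨Metric.totallyBounded_iff.2 fun ε hε => ?_,
    (isClosed_le continuous_norm continuous_const).isComplete⟩
  obtain ⟨m, hm⟩ := exists_pow_lt_of_lt_one hε hK.norm_pi_lt_one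
  refine ⟨Rm π 𝒯 m, Rm_finite hK m, fun x hx => Set.mem_biUnion (trunc_spec hK hx m).1 ?_⟩
  rw [Metric.mem_ball, dist_eq_norm]
  exact (trunc_spec hK hx m).2.trans_lt hm

variable [IsUltrametricDist K]

theorem norm_sub_le_max (x y : K) : ‖x - y‖ ≤ max ‖x‖ ‖y‖ := by
  simpa [sub_eq_add_neg] using IsUltrametricDist.norm_add_le_max x (-y)

theorem Rm_subset_Rint (hK : LocalFieldData π 𝒯 q) (m : ℕ) : Rm π 𝒯 m ⊆ Rint K := by
  induction m with
  | zero => simp [Rm_zero, Rint]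
  | succ m ih =>
    intro x hx
    obtain ⟨t, ht, s, hs, rfl⟩ := mem_Rm_succ_iff.1 hx
    refine (IsUltrametricDist.norm_add_le_max _ _).trans (max_le (hK.rep_subset ht) ?_)
    rw [norm_mul]
    exact mul_le_one₀ hK.norm_pi_lt_one.le (norm_nonneg _) (ih hs)

theorem eq_of_mem_Rm (hK : LocalFieldData π 𝒯 q) {m : ℕ} {s s' : K} (hs : s ∈ Rm π 𝒯 m)
    (hs' : s' ∈ Rm π 𝒯 m) (hd : ‖s - s'‖ ≤ ‖π‖ ^ m) : s = s' := by
  induction m generalizing s s' with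
  | zero => simp_all [Rm_zero]
  | succ m ih =>
    obtain ⟨t, ht, u, hu, rfl⟩ := mem_Rm_succ_iff.1 hs
    obtain ⟨t', ht', u', hu', rfl⟩ := mem_Rm_succ_iff.1 hs'
    have hπu : ‖π * (u - u')‖ ≤ ‖π‖ := by
      rw [norm_mul]
      exact mul_le_of_le_one_right (norm_nonneg _) ((norm_sub_le_max _ _).trans
        (max_le (Rm_subset_Rint hK m hu) (Rm_subset_Rint hK m hu')))
    have hd' : ‖(t + π * u) - (t' + π * u')‖ ≤ ‖π‖ :=
      hd.trans (pow_le_of_le_one (norm_nonneg _) hK.norm_pi_lt_one.le m.succ_ne_zero)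
    have htt : t = t' := hK.eq_of_norm_sub_lt_one ht ht' <| calc
      ‖t - t'‖ = ‖((t + π * u) - (t' + π * u')) - π * (u - u')‖ := by congr 1; ring
      _ ≤ ‖π‖ := (norm_sub_le_max _ _).trans (max_le hd' hπu)
      _ < 1 := hK.norm_pi_lt_one
    subst htt
    rw [show t + π * u - (t + π * u') = π * (u - u') by ring, norm_mul, pow_succ'] at hd
    rw [ih hu hu' (le_of_mul_le_mul_left hd hK.norm_pi_pos)]

theorem trunc_eq (hK : LocalFieldData π 𝒯 q) {x s : K} (hx : x ∈ Rint K) {m : ℕ}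
    (hs : s ∈ Rm π 𝒯 m) (hd : ‖x - s‖ ≤ ‖π‖ ^ m) : trunc π 𝒯 x m = s := by
  refine eq_of_mem_Rm hK (trunc_spec hK hx m).1 hs ?_
  rw [show trunc π 𝒯 x m - s = (x - s) - (x - trunc π 𝒯 x m) by ring]
  exact (norm_sub_le_max _ _).trans (max_le hd (trunc_spec hK hx m).2)

theorem trunc_eq_trunc (hK : LocalFieldData π 𝒯 q) {x y : K} (hx : x ∈ Rint K)
    (hy : y ∈ Rint K) {m : ℕ} (h : ‖x - y‖ ≤ ‖π‖ ^ m) : trunc π 𝒯 x m = trunc π 𝒯 y m := by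
  refine trunc_eq hK hx (trunc_spec hK hy m).1 ?_
  rw [show x - trunc π 𝒯 y m = (x - y) + (y - trunc π 𝒯 y m) by ring]
  exact (IsUltrametricDist.norm_add_le_max _ _).trans (max_le h (trunc_spec hK hy m).2)

theorem RR_subset_Rint (hK : LocalFieldData π 𝒯 q) : RR π 𝒯 ⊆ Rint K :=
  fun _ hr => Rm_subset_Rint hK _ (mem_Rm_len hr)

theorem rminus_spec (hK : LocalFieldData π 𝒯 q) {r : K} (hr : r ∈ RR π 𝒯) :
    rminus π 𝒯 r ∈ Rm π 𝒯 (len π 𝒯 r - 1) ∧ ‖r - rminus π 𝒯 r‖ ≤ ‖π‖ ^ (len π 𝒯 r - 1) :=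
  trunc_spec hK (RR_subset_Rint hK hr) _

theorem trunc_succ_of_ne (hK : LocalFieldData π 𝒯 q) {x : K} (hx : x ∈ Rint K) {m : ℕ}
    (h : trunc π 𝒯 x (m + 1) ≠ trunc π 𝒯 x m) :
    trunc π 𝒯 x (m + 1) ∈ RPlus π 𝒯 ∧ len π 𝒯 (trunc π 𝒯 x (m + 1)) = m + 1 ∧
      rminus π 𝒯 (trunc π 𝒯 x (m + 1)) = trunc π 𝒯 x m := by
  set r := trunc π 𝒯 x (m + 1)
  obtain ⟨hrm, hxr⟩ := trunc_spec hK hx (m + 1)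
  have hxr' : ‖x - r‖ ≤ ‖π‖ ^ m :=
    hxr.trans (pow_le_pow_of_le_one hK.norm_pi_pos.le hK.norm_pi_lt_one.le m.le_succ)
  have hr : r ∉ Rm π 𝒯 m := fun hmem => h (trunc_eq hK hx hmem hxr').symm
  have hrRR : r ∈ RR π 𝒯 := Set.mem_iUnion.2 ⟨_, hrm⟩
  have hlen : len π 𝒯 r = m + 1 := le_antisymm (len_le hrm) (lt_len_of_notMem_Rm hK hrRR hr)
  refine ⟨⟨hrRR, fun h0 => hr (h0 ▸ zero_mem_Rm hK m)⟩, hlen, ?_⟩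
  rw [rminus, hlen, Nat.add_sub_cancel]
  refine trunc_eq hK (RR_subset_Rint hK hrRR) (trunc_spec hK hx m).1 ?_
  rw [show r - trunc π 𝒯 x m = (x - trunc π 𝒯 x m) - (x - r) by ring]
  exact (norm_sub_le_max _ _).trans (max_le (trunc_spec hK hx m).2 hxr')

theorem nhdsWithin_Rint_diff_singleton_neBot (hK : LocalFieldData π 𝒯 q) {a : K}
    (ha : a ∈ Rint K) : (𝓝[Rint K \ {a}] a).NeBot := by
  rw [← mem_closure_iff_nhdsWithin_neBot, Metric.mem_closure_iff]
  intro ε hε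
  obtain ⟨m, hm⟩ := exists_pow_lt_of_lt_one hε hK.norm_pi_lt_one
  have hπm : ‖π ^ m‖ ≤ 1 := by
    rw [norm_pow]; exact pow_le_one₀ hK.norm_pi_pos.le hK.norm_pi_lt_one.le
  refine ⟨a + π ^ m, ⟨(IsUltrametricDist.norm_add_le_max _ _).trans (max_le ha hπm), ?_⟩, ?_⟩
  · simpa using pow_ne_zero m hK.pi_ne_zero
  · simpa [dist_eq_norm, norm_pow] using hm

theorem norm_apply_sub_apply_trunc_le (hK : LocalFieldData π 𝒯 q) {f : K → K} (hf : ContinuousOn f (Rint K))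
    {x : K} (hx : x ∈ Rint K) {n : ℕ} {c : ℝ}
    (hstep : ∀ m ≥ n, ‖f (trunc π 𝒯 x (m + 1)) - f (trunc π 𝒯 x m)‖ ≤ c) :
    ‖f x - f (trunc π 𝒯 x n)‖ ≤ c := by
  have hpartial : ∀ k, ‖f (trunc π 𝒯 x (n + k)) - f (trunc π 𝒯 x n)‖ ≤ c := by
    intro k
    induction k with
    | zero => simpa using (norm_nonneg _).trans (hstep n le_rfl)
    | succ k ih =>
      rw [← add_assoc,
        ← sub_add_sub_cancel (f (trunc π 𝒯 x (n + k + 1))) (f (trunc π 𝒯 x (n + k)))]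
      exact (IsUltrametricDist.norm_add_le_max _ _).trans
        (max_le (hstep _ (Nat.le_add_right n k)) ih)
  have htrunc : Tendsto (fun k => trunc π 𝒯 x (n + k)) atTop (𝓝[Rint K] x) :=
    tendsto_nhdsWithin_iff.2 ⟨(tendsto_trunc hK hx).comp
      (tendsto_atTop_mono (Nat.le_add_left · n) tendsto_id), Eventually.of_forall fun k => Rm_subset_Rint hK _ (trunc_spec hK hx _).1⟩
  exact le_of_tendsto' ((((hf x hx).tendsto.comp htrunc).sub_const _).norm) hpartial

theorem norm_apply_trunc_succ_sub_le (hK : LocalFieldData π 𝒯 q) {f : K → K} {x : K}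
    (hx : x ∈ Rint K) {m : ℕ} {ε : ℝ} (hε : 0 ≤ ε)
    (hcoef : ∀ r ∈ RPlus π 𝒯, len π 𝒯 r = m + 1 → ‖b0 π 𝒯 f r * (gamma π 𝒯 r)⁻¹‖ ≤ ε) :
    ‖f (trunc π 𝒯 x (m + 1)) - f (trunc π 𝒯 x m)‖ ≤ ε * ‖π‖ ^ m := by
  by_cases he : trunc π 𝒯 x (m + 1) = trunc π 𝒯 x m
  · rw [he, sub_self, norm_zero]
    exact mul_nonneg hε (pow_nonneg (norm_nonneg _) m)
  obtain ⟨hrP, hlen, hrm⟩ := trunc_succ_of_ne hK hx he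
  have hslope := hcoef _ hrP hlen
  rw [b0_mul_gamma_inv f hrP.2, hrm] at hslope
  have hdist := (rminus_spec hK hrP.1).2
  rw [hlen, hrm, Nat.add_sub_cancel] at hdist
  rw [← vsub_eq_sub, ← sub_smul_slope, norm_smul, mul_comm]
  exact mul_le_mul hslope hdist (norm_nonneg _) hε

theorem uniformlyFlatOn_of_coeff_lt (hK : LocalFieldData π 𝒯 q) {f : K → K}
    (hf : ContinuousOn f (Rint K))
    (H : ∀ ε : ℝ, 0 < ε → ∃ S : Finset K, ↑S ⊆ RPlus π 𝒯 ∧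
      ∀ r ∈ RPlus π 𝒯, r ∉ S → ‖b0 π 𝒯 f r * (gamma π 𝒯 r)⁻¹‖ < ε) :
    UniformlyFlatOn f (Rint K) := by
  intro ε hε
  obtain ⟨S, -, hS⟩ := H ε hε
  set N := S.sup (len π 𝒯)
  have htail : ∀ z ∈ Rint K, ∀ n, N ≤ n → ‖f z - f (trunc π 𝒯 z n)‖ ≤ ε * ‖π‖ ^ n := by
    intro z hz n hn
    refine norm_apply_sub_apply_trunc_le hK hf hz fun m hm => ?_
    refine (norm_apply_trunc_succ_sub_le hK hz hε.le fun r hr hlen => (hS r hr fun hrS => ?_).le).trans ?_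
    · have := Finset.le_sup (f := len π 𝒯) hrS
      omega
    · exact mul_le_mul_of_nonneg_left
        (pow_le_pow_of_le_one hK.norm_pi_pos.le hK.norm_pi_lt_one.le hm) hε.le
  refine ⟨‖π‖ ^ N, pow_pos hK.norm_pi_pos N, fun x hx y hy hxy => ?_⟩
  rcases eq_or_ne x y with rfl | hne
  · simpa using hε.le
  obtain ⟨n, hn⟩ :=
    hK.exists_norm_eq_pow (sub_ne_zero.2 hne) ((norm_sub_le_max x y).trans (max_le hx hy))
  have hNn : N ≤ n := by
    rw [hn] at hxy
    exact ((pow_lt_pow_iff_right_of_lt_one₀ hK.norm_pi_pos hK.norm_pi_lt_one).1 hxy).le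
  have htr := trunc_eq_trunc hK hx hy hn.le
  have hfxy : ‖f y - f x‖ ≤ ε * ‖π‖ ^ n := by
    rw [show f y - f x = (f y - f (trunc π 𝒯 y n)) - (f x - f (trunc π 𝒯 x n)) by
      rw [htr]; ring]
    exact (norm_sub_le_max _ _).trans (max_le (htail y hy n hNn) (htail x hx n hNn))
  rwa [slope_def_field, norm_div, norm_sub_rev y x, hn, div_le_iff₀ (pow_pos hK.norm_pi_pos n)]

theorem coeff_lt_of_uniformlyFlatOn (hK : LocalFieldData π 𝒯 q) {f : K → K}
    (h : UniformlyFlatOn f (Rint K)) :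
    ∀ ε : ℝ, 0 < ε → ∃ S : Finset K, ↑S ⊆ RPlus π 𝒯 ∧
      ∀ r ∈ RPlus π 𝒯, r ∉ S → ‖b0 π 𝒯 f r * (gamma π 𝒯 r)⁻¹‖ < ε := by
  classical
  intro ε hε
  obtain ⟨δ, hδ, hflat⟩ := h (ε / 2) (half_pos hε)
  obtain ⟨M, hM⟩ := exists_pow_lt_of_lt_one hδ hK.norm_pi_lt_one
  refine ⟨(Rm_finite hK M).toFinset.erase 0, fun r hr => ?_, fun r hr hrS => ?_⟩
  · simp only [Finset.coe_erase, Set.Finite.coe_toFinset] at hr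
    exact ⟨Set.mem_iUnion.2 ⟨M, hr.1⟩, hr.2⟩
  have hM' : M < len π 𝒯 r :=
    lt_len_of_notMem_Rm hK hr.1 fun hmem =>
      hrS (Finset.mem_erase.2 ⟨hr.2, (Rm_finite hK M).mem_toFinset.2 hmem⟩)
  obtain ⟨hrm, hdist⟩ := rminus_spec hK hr.1
  rw [b0_mul_gamma_inv f hr.2]
  refine (hflat _ (Rm_subset_Rint hK _ hrm) _ (RR_subset_Rint hK hr.1) ?_).trans_lt
    (half_lt_self hε)
  rw [norm_sub_rev]
  exact hdist.trans_lt ((pow_le_pow_of_le_one hK.norm_pi_pos.le hK.norm_pi_lt_one.le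
    (by omega)).trans_lt hM)

end LocalField

/-- A continuous `f : R → K` is an `N¹`-function (a `C¹`-function with `f' = 0`) iff
`lim_{r ∈ ℛ₊} b_r(f)γ_r⁻¹ = 0`: for every `ε > 0` there is a finite `S_ε ⊆ ℛ₊` with
`|b_r(f)γ_r⁻¹| < ε` for all `r ∈ ℛ₊ \ S_ε`. -/
theorem statement_8 (π : K) (𝒯 : Set K) (q : ℕ) (hK : LocalFieldData π 𝒯 q)
    (f : K → K) (hf : ContinuousOn f (Rint K)) :
    (IsCn f 1 ∧ ∀ a ∈ Rint K, HasDerivWithinAt f 0 (Rint K) a) ↔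
      ∀ ε : ℝ, 0 < ε → ∃ S : Finset K, ↑S ⊆ RPlus π 𝒯 ∧
        ∀ r ∈ RPlus π 𝒯, r ∉ S → ‖b0 π 𝒯 f r * (gamma π 𝒯 r)⁻¹‖ < ε := by
  constructor
  · rintro ⟨⟨g, hg, hgΦ⟩, hD⟩
    have hslope := continuousOn_slope_of_extension
      (fun a ha => nhdsWithin_Rint_diff_singleton_neBot hK ha) hg
      (fun v hv hinj => (hgΦ v hv hinj).trans (Phi_one_eq_slope f v)) hD
    exact coeff_lt_of_uniformlyFlatOn hK
      (uniformlyFlatOn_of_continuousOn_slope (isCompact_Rint hK) hslope)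
  · intro H
    have hflat := uniformlyFlatOn_of_coeff_lt hK hf H
    exact ⟨⟨_, hflat.continuousOn_slope hf, fun v _ _ => (Phi_one_eq_slope f v).symm⟩,
      fun a ha => hflat.hasDerivWithinAt ha⟩

end DSW
end
end

section
/- Let n ≥ 1. (1) Every C^n-function f : R → K is an n-th Lipschitz function, i.e. sup{|Φ_n f(x_1,…,x_{n+1})| : (x_1,…,x_{n+1}) ∈ ∇^{n+1}R} < ∞. (2) Every n-th Lipschitz function f : R → K is a C^{n−1}-function. -/
open scoped ENNReal NNReal
open Filter Topology

noncomputable section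

namespace DSW

open Finset

section DividedDifference

variable {F : Type*} [Field F] [DecidableEq F]

def divDiff (f : F → F) (S : Finset F) : F :=
  ∑ c ∈ S, f c * Lagrange.nodalWeight S id c

@[simp] lemma divDiff_singleton (f : F → F) (a : F) : divDiff f {a} = f a := by
  simp [divDiff, Lagrange.nodalWeight]

lemma nodalWeight_insert_self {S : Finset F} {a : F} (ha : a ∉ S) :
    Lagrange.nodalWeight (insert a S) id a = ∏ d ∈ S, (a - d)⁻¹ := by
  rw [Lagrange.nodalWeight, erase_insert ha]
  rfl

lemma nodalWeight_insert_of_ne {S : Finset F} {a c : F} (ha : a ∉ S) (hc : c ≠ a) :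
    Lagrange.nodalWeight (insert a S) id c = (c - a)⁻¹ * Lagrange.nodalWeight S id c := by
  rw [Lagrange.nodalWeight, erase_insert_of_ne hc.symm,
    prod_insert fun h => ha (mem_of_mem_erase h)]
  rfl

lemma divDiff_insert_insert (f : F → F) {a b : F} {S : Finset F} (hab : a ≠ b) (ha : a ∉ S)
    (hb : b ∉ S) :
    divDiff f (insert a (insert b S)) =
      (divDiff f (insert a S) - divDiff f (insert b S)) / (a - b) := by
  have ha' : a ∉ insert b S := by simp [hab, ha]
  have hab' : a - b ≠ 0 := sub_ne_zero.mpr hab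
  have hba : b - a ≠ 0 := sub_ne_zero.mpr hab.symm
  have hweight : ∀ c ∈ S, Lagrange.nodalWeight (insert a (insert b S)) id c =
      (Lagrange.nodalWeight (insert a S) id c - Lagrange.nodalWeight (insert b S) id c) /
        (a - b) := by
    intro c hc
    have hca : c ≠ a := by rintro rfl; exact ha hc
    have hcb : c ≠ b := by rintro rfl; exact hb hc
    rw [nodalWeight_insert_of_ne ha' hca, nodalWeight_insert_of_ne hb hcb,
      nodalWeight_insert_of_ne ha hca]
    field_simp [sub_ne_zero.mpr hca, sub_ne_zero.mpr hcb]
    ring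
  simp only [divDiff]
  rw [sum_insert ha', sum_insert hb, sum_insert ha, sum_insert hb,
    nodalWeight_insert_self ha', nodalWeight_insert_of_ne ha' hab.symm,
    nodalWeight_insert_self hb, nodalWeight_insert_self ha, prod_insert hb,
    sum_congr rfl fun c hc => by rw [hweight c hc]]
  simp only [mul_div_assoc', ← sum_div, mul_sub, sum_sub_distrib]
  field_simp
  ring

end DividedDifference

section Tuples

variable {ι α : Type*}

lemma exists_injective_forall_mem {m : ℕ} (A : Fin m → Set α) (hA : ∀ i, (A i).Infinite) :
    ∃ y : Fin m → α, Function.Injective y ∧ ∀ i, y i ∈ A i := by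
  induction m with
  | zero => exact ⟨Fin.elim0, fun i => i.elim0, fun i => i.elim0⟩
  | succ m ih =>
    obtain ⟨t, ht, htA⟩ := ih (fun i => A i.succ) fun i => hA i.succ
    obtain ⟨a, haA, hat⟩ := ((hA 0).sdiff (Set.finite_range t)).nonempty
    exact ⟨Fin.cons a t, Fin.cons_injective_iff.mpr ⟨hat, ht⟩, Fin.cases haA htA⟩

variable [DecidableEq α]

lemma image_univ_cons {n : ℕ} (a : α) (t : Fin n → α) :
    univ.image (Fin.cons a t : Fin (n + 1) → α) = insert a (univ.image t) := by
  rw [← coe_inj, coe_insert, Fintype.coe_image_univ, Fintype.coe_image_univ, Fin.range_cons]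

variable [Fintype ι] [DecidableEq ι]

lemma image_univ_update (y : ι → α) (k : ι) (c : α) :
    univ.image (Function.update y k c) = insert c ((univ.erase k).image y) := by
  rw [← insert_erase (mem_univ k), image_insert, Function.update_self, erase_insert_eq_erase,
    erase_eq_self.mpr (notMem_erase k univ)]
  exact congrArg _ (image_congr fun i hi => Function.update_of_ne (ne_of_mem_erase hi) _ _)

lemma notMem_image_erase_of_injective_update {y : ι → α} {k : ι} {c : α}
    (h : Function.Injective (Function.update y k c)) : c ∉ (univ.erase k).image y := by
  simp only [mem_image, mem_erase, mem_univ, and_true, not_exists, not_and]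
  intro i hik hyi
  exact hik (h (by rw [Function.update_of_ne hik, Function.update_self, hyi]))

lemma card_image_erase_of_injective_update {y : ι → α} {k : ι} {c : α}
    (h : Function.Injective (Function.update y k c)) :
    #((univ.erase k).image y) + 1 = Fintype.card ι := by
  rw [← card_insert_of_notMem (notMem_image_erase_of_injective_update h), ← image_univ_update,
    card_image_of_injective _ h, card_univ]

end Tuples

lemma _root_.UniformContinuousOn.continuousOn_extendFrom {α β : Type*} [UniformSpace α]
    [UniformSpace β] [CompleteSpace β] {f : α → β} {A B : Set α} (hf : UniformContinuousOn f A)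
    (hB : B ⊆ closure A) : ContinuousOn (extendFrom A f) B :=
  _root_.continuousOn_extendFrom hB fun x hx => by
    have := mem_closure_iff_nhdsWithin_neBot.mp (hB hx)
    exact CompleteSpace.complete ((cauchy_nhds.mono nhdsWithin_le_nhds).map_of_le hf inf_le_right)

section DifferenceQuotient

variable {K : Type*} [NontriviallyNormedField K]

lemma phi_cons_cons (f : K → K) {n : ℕ} (a b : K) (t : Fin n → K) :
    Phi f (n + 1) (Fin.cons a (Fin.cons b t)) =
      (Phi f n (Fin.cons a t) - Phi f n (Fin.cons b t)) / (a - b) :=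
  rfl

lemma phi_eq_divDiff [DecidableEq K] (f : K → K) :
    ∀ {n : ℕ} {x : Fin (n + 1) → K}, Function.Injective x →
      Phi f n x = divDiff f (univ.image x)
  | 0, x, _ => by simp [Phi]
  | n + 1, x, hx => by
    obtain ⟨a, y, rfl⟩ : ∃ a y, Fin.cons a y = x := ⟨_, _, Fin.cons_self_tail x⟩
    obtain ⟨b, t, rfl⟩ : ∃ b t, Fin.cons b t = y := ⟨_, _, Fin.cons_self_tail y⟩
    rw [Fin.cons_injective_iff, Fin.range_cons, Fin.cons_injective_iff] at hx
    obtain ⟨hab, hbt, ht⟩ := hx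
    have hat : a ∉ Set.range t := fun h => hab (Or.inr h)
    rw [phi_cons_cons, phi_eq_divDiff f (Fin.cons_injective_iff.mpr ⟨hat, ht⟩),
      phi_eq_divDiff f (Fin.cons_injective_iff.mpr ⟨hbt, ht⟩), image_univ_cons, image_univ_cons,
      image_univ_cons, image_univ_cons,
      divDiff_insert_insert f (fun h => hab (Or.inl h)) (by simpa using hat) (by simpa using hbt)]

lemma norm_divDiff_le_of_forall_norm_phi_le [DecidableEq K] (f : K → K) {n : ℕ} {M : ℝ}
    (hbound : ∀ x ∈ nabla K (n + 1), ‖Phi f n x‖ ≤ M) {S : Finset K} (hS : #S = n + 1)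
    (hSR : ∀ s ∈ S, ‖s‖ ≤ 1) : ‖divDiff f S‖ ≤ M := by
  set x : Fin (n + 1) → K := fun i => ((S.equivFinOfCardEq hS).symm i : K)
  have hx : Function.Injective x := Subtype.val_injective.comp (Equiv.injective _)
  have himage : univ.image x = S := by
    ext s
    simp only [mem_image, mem_univ, true_and]
    refine ⟨fun ⟨i, hi⟩ => hi ▸ coe_mem _, fun hs => ⟨S.equivFinOfCardEq hS ⟨s, hs⟩, by simp [x]⟩⟩
  rw [← himage, ← phi_eq_divDiff f hx]
  exact hbound x ⟨fun i => hSR _ (coe_mem _), hx⟩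

lemma norm_phi_update_sub_le [DecidableEq K] (f : K → K) {m : ℕ} {M : ℝ}
    (hbound : ∀ x ∈ nabla K (m + 2), ‖Phi f (m + 1) x‖ ≤ M) {y : Fin (m + 1) → K}
    {k : Fin (m + 1)} {a b : K} (ha : Function.update y k a ∈ nabla K (m + 1))
    (hb : Function.update y k b ∈ nabla K (m + 1)) :
    ‖Phi f m (Function.update y k a) - Phi f m (Function.update y k b)‖ ≤ M * ‖a - b‖ := by
  rcases eq_or_ne a b with rfl | hab
  · simp
  set T := (univ.erase k).image y
  have haT : a ∉ T := notMem_image_erase_of_injective_update ha.2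
  have hbT : b ∉ T := notMem_image_erase_of_injective_update hb.2
  have hT : #T = m := by simpa using card_image_erase_of_injective_update ha.2
  have hTR : ∀ s ∈ T, ‖s‖ ≤ 1 := by
    simp only [T, mem_image, mem_erase, mem_univ, and_true, forall_exists_index, and_imp]
    rintro _ i hik rfl
    simpa [Function.update_of_ne hik] using ha.1 i
  have haR : ‖a‖ ≤ 1 := by simpa using ha.1 k
  have hbR : ‖b‖ ≤ 1 := by simpa using hb.1 k
  rw [phi_eq_divDiff f ha.2, phi_eq_divDiff f hb.2, image_univ_update, image_univ_update,
    ← mul_div_cancel₀ (divDiff f (insert a T) - divDiff f (insert b T)) (sub_ne_zero.mpr hab),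
    ← divDiff_insert_insert f hab haT hbT, norm_mul, mul_comm]
  refine mul_le_mul_of_nonneg_right (norm_divDiff_le_of_forall_norm_phi_le f hbound ?_ ?_)
    (norm_nonneg _)
  · rw [card_insert_of_notMem (by simp [hab, haT]), card_insert_of_notMem hbT, hT]
  · simp only [mem_insert, forall_eq_or_imp]
    exact ⟨haR, hbR, hTR⟩

end DifferenceQuotient

section Ultrametric

variable {K : Type*} [NontriviallyNormedField K] [IsUltrametricDist K]

lemma exists_mem_nabla_dist_lt {m : ℕ} {x : Fin m → K} (hx : ∀ i, ‖x i‖ ≤ 1) (s : Finset K)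
    {ε : ℝ} (hε : 0 < ε) : ∃ y ∈ nabla K m, dist y x < ε ∧ ∀ i, y i ∉ s := by
  have hA : ∀ i, ((Metric.ball (x i) ε ∩ Metric.closedBall 0 1) \ ↑s).Infinite := fun i =>
    (infinite_of_mem_nhds (x i) (Filter.inter_mem (Metric.ball_mem_nhds _ hε)
      ((IsUltrametricDist.isOpen_closedBall 0 one_ne_zero).mem_nhds (by simpa using hx i)))).sdiff
      s.finite_toSet
  obtain ⟨y, hy, hyA⟩ := exists_injective_forall_mem _ hA
  refine ⟨y, ⟨fun i => by simpa using (hyA i).1.2, hy⟩, ?_, fun i => (hyA i).2⟩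
  rcases isEmpty_or_nonempty (Fin m) with hm | hm
  · simpa [Subsingleton.elim y x] using hε
  exact (dist_pi_lt_iff hε).mpr fun i => (hyA i).1.1

lemma cube_subset_closure_nabla (m : ℕ) :
    {x : Fin m → K | ∀ i, ‖x i‖ ≤ 1} ⊆ closure (nabla K m) := fun x hx =>
  Metric.mem_closure_iff.mpr fun ε hε => by
    obtain ⟨y, hy, hyx, -⟩ := exists_mem_nabla_dist_lt hx ∅ hε
    exact ⟨y, hy, dist_comm x y ▸ hyx⟩

lemma norm_phi_sub_le_of_disjoint [DecidableEq K] (f : K → K) {m : ℕ} {M : ℝ} (hM : 0 ≤ M)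
    (hbound : ∀ x ∈ nabla K (m + 2), ‖Phi f (m + 1) x‖ ≤ M) {u w : Fin (m + 1) → K}
    (hu : u ∈ nabla K (m + 1)) (hw : w ∈ nabla K (m + 1)) (hdisj : ∀ i j, u i ≠ w j) :
    ‖Phi f m u - Phi f m w‖ ≤ M * dist u w := by
  set mix : ℕ → Fin (m + 1) → K := fun k i => if (i : ℕ) < k then w i else u i
  have hmix : ∀ k, mix k ∈ nabla K (m + 1) := by
    refine fun k => ⟨fun i => ?_, fun i j hij => ?_⟩
    · simp only [mix]
      split_ifs
      exacts [hw.1 i, hu.1 i]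
    · simp only [mix] at hij
      split_ifs at hij
      exacts [hw.2 hij, (hdisj j i hij.symm).elim, (hdisj i j hij).elim, hu.2 hij]
  have hstep : ∀ k ∈ range (m + 1),
      ‖Phi f m (mix k) - Phi f m (mix (k + 1))‖ ≤ M * dist u w := by
    intro k hk
    set i₀ : Fin (m + 1) := ⟨k, mem_range.mp hk⟩
    have hu₀ : Function.update (mix k) i₀ (u i₀) = mix k :=
      Function.update_eq_self_iff.mpr (by simp [mix, i₀])
    have hw₀ : Function.update (mix k) i₀ (w i₀) = mix (k + 1) := by
      ext i
      rcases eq_or_ne i i₀ with rfl | hi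
      · simp [mix, i₀]
      · have hik : (i : ℕ) < k + 1 ↔ (i : ℕ) < k := by
          have : (i : ℕ) ≠ k := fun h => hi (Fin.ext h)
          omega
        simp only [mix, Function.update_of_ne hi, hik]
    have hupdate := norm_phi_update_sub_le f hbound (hu₀ ▸ hmix k) (hw₀ ▸ hmix (k + 1))
    rw [hu₀, hw₀, ← dist_eq_norm (u i₀)] at hupdate
    exact hupdate.trans (mul_le_mul_of_nonneg_left (dist_le_pi_dist u w i₀) hM)
  have hmix₀ : mix 0 = u := by ext i; simp [mix]
  have hmix_last : mix (m + 1) = w := funext fun i => if_pos i.isLt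
  have htelescope := sum_range_sub' (fun k => Phi f m (mix k)) (m + 1)
  rw [hmix₀, hmix_last] at htelescope
  rw [← htelescope]
  exact IsUltrametricDist.norm_sum_le_of_forall_le_of_nonneg (by positivity) hstep

lemma norm_phi_sub_le [DecidableEq K] (f : K → K) {m : ℕ} {M : ℝ} (hM : 0 ≤ M)
    (hbound : ∀ x ∈ nabla K (m + 2), ‖Phi f (m + 1) x‖ ≤ M) {u v : Fin (m + 1) → K}
    (hu : u ∈ nabla K (m + 1)) (hv : v ∈ nabla K (m + 1)) :
    dist (Phi f m u) (Phi f m v) ≤ M * dist u v := by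
  rcases eq_or_ne u v with rfl | huv
  · simp
  obtain ⟨w, hw, hwu, hws⟩ :=
    exists_mem_nabla_dist_lt hu.1 (univ.image u ∪ univ.image v) (dist_pos.mpr huv)
  have hvw : dist v w ≤ dist u v :=
    (IsUltrametricDist.dist_triangle_max v u w).trans
      (max_le (dist_comm v u).le (dist_comm u w ▸ hwu.le))
  have hdisj_u : ∀ i j, u i ≠ w j := fun i j h => hws j (by simp [← h])
  have hdisj_v : ∀ i j, v i ≠ w j := fun i j h => hws j (by simp [← h])
  calc dist (Phi f m u) (Phi f m v)
      ≤ max (dist (Phi f m u) (Phi f m w)) (dist (Phi f m v) (Phi f m w)) := by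
        simpa only [dist_comm (Phi f m w)] using
          IsUltrametricDist.dist_triangle_max (Phi f m u) (Phi f m w) (Phi f m v)
    _ ≤ max (M * dist u w) (M * dist v w) := by
        rw [dist_eq_norm, dist_eq_norm]
        exact max_le_max (norm_phi_sub_le_of_disjoint f hM hbound hu hw hdisj_u)
          (norm_phi_sub_le_of_disjoint f hM hbound hv hw hdisj_v)
    _ ≤ M * dist u v := max_le (mul_le_mul_of_nonneg_left (dist_comm u w ▸ hwu.le) hM)
        (mul_le_mul_of_nonneg_left hvw hM)

theorem isCn_of_iSup_nnnorm_phi_lt_top [CompleteSpace K] (f : K → K) {m : ℕ}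
    (hsup : (⨆ x : nabla K (m + 2), (‖Phi f (m + 1) ↑x‖₊ : ℝ≥0∞)) < ⊤) : IsCn f m := by
  classical
  set M := (⨆ x : nabla K (m + 2), (‖Phi f (m + 1) ↑x‖₊ : ℝ≥0∞)).toNNReal
  have hbound : ∀ x ∈ nabla K (m + 2), ‖Phi f (m + 1) x‖ ≤ M := fun x hx => by
    rw [← coe_nnnorm, NNReal.coe_le_coe, ← ENNReal.coe_le_coe, ENNReal.coe_toNNReal hsup.ne]
    exact le_iSup (fun x : nabla K (m + 2) => (‖Phi f (m + 1) ↑x‖₊ : ℝ≥0∞)) ⟨x, hx⟩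
  have hlip : LipschitzOnWith M (Phi f m) (nabla K (m + 1)) :=
    LipschitzOnWith.of_dist_le_mul fun u hu v hv => norm_phi_sub_le f M.coe_nonneg hbound hu hv
  exact ⟨extendFrom (nabla K (m + 1)) (Phi f m),
    UniformContinuousOn.continuousOn_extendFrom hlip.uniformContinuousOn
      (cube_subset_closure_nabla _),
    fun x hx hinj => extendFrom_extends hlip.uniformContinuousOn.continuousOn x ⟨hx, hinj⟩⟩

end Ultrametric

namespace LocalFieldData

variable {K : Type*} [NontriviallyNormedField K] {π : K} {𝒯 : Set K} {q : ℕ}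

lemma norm_pi_pos_s18 (hK : LocalFieldData π 𝒯 q) : 0 < ‖π‖ := by
  rw [hK.norm_pi]
  exact inv_pos.mpr (Nat.cast_pos.mpr (Nat.zero_lt_of_lt hK.one_lt_q))

lemma norm_pi_lt_one_s18 (hK : LocalFieldData π 𝒯 q) : ‖π‖ < 1 := by
  rw [hK.norm_pi]
  exact inv_lt_one_of_one_lt₀ (Nat.one_lt_cast.mpr hK.one_lt_q)

lemma norm_le_norm_pi_of_norm_lt_one (hK : LocalFieldData π 𝒯 q) {y : K} (hy : ‖y‖ < 1) :
    ‖y‖ ≤ ‖π‖ := by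
  rcases eq_or_ne y 0 with rfl | hy0
  · simp [hK.norm_pi_pos_s18.le]
  obtain ⟨k, hk⟩ := hK.norm_discrete y hy0
  rw [hk] at hy ⊢
  have hk : 1 ≤ k := (zpow_lt_one_iff_right_of_lt_one₀ hK.norm_pi_pos_s18 hK.norm_pi_lt_one_s18).mp hy
  simpa using zpow_le_zpow_right_of_le_one₀ hK.norm_pi_pos_s18 hK.norm_pi_lt_one_s18.le hk

lemma exists_mem_Rm_norm_sub_le (hK : LocalFieldData π 𝒯 q) (m : ℕ) {x : K} (hx : ‖x‖ ≤ 1) :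
    ∃ r ∈ Rm π 𝒯 m, ‖x - r‖ ≤ ‖π‖ ^ m := by
  induction m with
  | zero => exact ⟨0, ⟨Fin.elim0, fun i => i.elim0, by simp⟩, by simpa using hx⟩
  | succ m ih =>
    obtain ⟨r, ⟨a, ha, rfl⟩, hr⟩ := ih
    have hπm : π ^ m ≠ 0 := pow_ne_zero _ (norm_pos_iff.mp hK.norm_pi_pos_s18)
    set y := (x - ∑ i, a i * π ^ (i : ℕ)) / π ^ m
    have hy : ‖y‖ ≤ 1 := by
      rw [norm_div, norm_pow, div_le_one (pow_pos hK.norm_pi_pos_s18 m)]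
      exact hr
    obtain ⟨t, ⟨ht, hyt⟩, -⟩ := hK.rep_unique y hy
    refine ⟨∑ i, a i * π ^ (i : ℕ) + t * π ^ m, ⟨Fin.snoc a t, fun i => ?_, ?_⟩, ?_⟩
    · cases i using Fin.lastCases <;> simp [ht, ha]
    · simp [Fin.sum_univ_castSucc]
    · have hsplit : x - (∑ i, a i * π ^ (i : ℕ) + t * π ^ m) = (y - t) * π ^ m := by
        simp only [y]
        field_simp
        ring
      rw [hsplit, norm_mul, norm_pow, pow_succ']
      exact mul_le_mul_of_nonneg_right (hK.norm_le_norm_pi_of_norm_lt_one hyt) (by positivity)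

lemma finite_Rm (hK : LocalFieldData π 𝒯 q) (m : ℕ) : (Rm π 𝒯 m).Finite := by
  refine ((Set.Finite.pi fun _ => hK.finite_rep).image
    fun a : Fin m → K => ∑ i, a i * π ^ (i : ℕ)).subset ?_
  rintro x ⟨a, ha, rfl⟩
  exact ⟨a, fun i _ => ha i, rfl⟩

lemma isCompact_Rint [CompleteSpace K] (hK : LocalFieldData π 𝒯 q) : IsCompact (Rint K) := by
  refine TotallyBounded.isCompact_of_isClosed (Metric.totallyBounded_iff.mpr fun ε hε => ?_)
    (isClosed_le continuous_norm continuous_const)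
  obtain ⟨m, hm⟩ := exists_pow_lt_of_lt_one hε hK.norm_pi_lt_one_s18
  refine ⟨Rm π 𝒯 m, hK.finite_Rm m, fun x hx => ?_⟩
  obtain ⟨r, hr, hxr⟩ := hK.exists_mem_Rm_norm_sub_le m hx
  exact Set.mem_biUnion hr (by rw [Metric.mem_ball, dist_eq_norm]; exact hxr.trans_lt hm)

end LocalFieldData

theorem IsCn.iSup_nnnorm_phi_lt_top {K : Type*} [NontriviallyNormedField K] [CompleteSpace K]
    {π : K} {𝒯 : Set K} {q : ℕ} (hK : LocalFieldData π 𝒯 q) {f : K → K} {n : ℕ} (hf : IsCn f n) :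
    (⨆ x : nabla K (n + 1), (‖Phi f n ↑x‖₊ : ℝ≥0∞)) < ⊤ := by
  obtain ⟨g, hg, hgPhi⟩ := hf
  have hcube : {x : Fin (n + 1) → K | ∀ i, ‖x i‖ ≤ 1} = Set.univ.pi fun _ => Rint K := by
    ext x
    simp [Rint]
  have hcompact : IsCompact {x : Fin (n + 1) → K | ∀ i, ‖x i‖ ≤ 1} :=
    hcube ▸ isCompact_univ_pi fun _ => hK.isCompact_Rint
  obtain ⟨C, hC⟩ := hcompact.exists_bound_of_continuousOn hg
  refine lt_of_le_of_lt (iSup_le fun x => ?_) (ENNReal.ofReal_lt_top (r := C))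
  rw [← hgPhi _ x.2.1 x.2.2, ← enorm_eq_nnnorm, ← ofReal_norm]
  exact ENNReal.ofReal_le_ofReal (hC _ x.2.1)

variable {K : Type*} [NontriviallyNormedField K] [CompleteSpace K] [IsUltrametricDist K]

/-- (1) Every `Cⁿ`-function is an `n`-th Lipschitz function; (2) every `n`-th Lipschitz
function is a `Cⁿ⁻¹`-function. -/
theorem statement_18 (π : K) (𝒯 : Set K) (q : ℕ) (hK : LocalFieldData π 𝒯 q)
    (n : ℕ) (hn : 1 ≤ n) :
    (∀ f : K → K, IsCn f n →
      (⨆ x : nabla K (n + 1), (‖Phi f n ↑x‖₊ : ℝ≥0∞)) < ⊤) ∧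
    (∀ f : K → K, ContinuousOn f (Rint K) →
      (⨆ x : nabla K (n + 1), (‖Phi f n ↑x‖₊ : ℝ≥0∞)) < ⊤ → IsCn f (n - 1)) := by
  refine ⟨fun f hf => hf.iSup_nnnorm_phi_lt_top hK, fun f _ hsup => ?_⟩
  obtain ⟨m, rfl⟩ := Nat.exists_eq_add_of_le' hn
  exact isCn_of_iSup_nnnorm_phi_lt_top f hsup

end DSW
end
end
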